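/- Lower bound on the Laplacian spectral width (Lemma 8): let w ∈ ℝ^N with w_i ≥ 0 for all i and Σ_{i=1}^N w_i = c, and set M := max(λmax(L1), λmax(L2)). Then λn(L(w)) − λ2(L(w)) ≥ M − 2c/N. If equality holds, then necessarily λn(L(w)) = M and λ2(L(w)) = 2c/N. Moreover, if in addition λmax(L1) ≥ λmax(L2), φ ∈ ℝ^N satisfies L1·φ = λmax(L1)·φ with φ_i ≠ 0 for every i, and c > 0, then the inequality is strict: λn(L(w)) − λ2(L(w)) > M − 2c/N. -/

import Mathlib

/-!
On `(x; y)` the quadratic form of `L(w)` is `xᵀL₁x + yᵀL₂y + ∑ wᵢ (xᵢ - yᵢ)²`. Testing it on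
`(u; 0)` and `(0; u)`, with `u` a top eigenvector of one layer, gives `λₙ ≥ M`. On the plane
spanned by `(1; 1)` and `(1; -1)` it is at most `2c/N` times the squared norm, so Courant–Fischer
gives `λ₂ ≤ 2c/N`; equality in the sum of the two bounds forces equality in each. If a top
eigenvector `φ` of `L₁` has no zero entry and `c > 0`, the coupling term `∑ wᵢ φᵢ²` is positive,
whence `λₙ > M`.
-/

open Matrix

/-- Eigenvalues of a real symmetric matrix, listed in nondecreasing order with multiplicity
(junk value `0` if the matrix is not Hermitian). -/
noncomputable def sortedEigs {m : ℕ} (A : Matrix (Fin m) (Fin m) ℝ) : Fin m → ℝ :=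
  if hA : A.IsHermitian then fun k => hA.eigenvalues (Tuple.sort hA.eigenvalues k) else 0

/-- The supra-Laplacian `L(w) = [[L1 + W, -W], [-W, L2 + W]]` of a two-layer multiplex,
as a matrix indexed by `Fin (N + N)`. -/
noncomputable def supraLap {N : ℕ} (L1 L2 : Matrix (Fin N) (Fin N) ℝ) (w : Fin N → ℝ) :
    Matrix (Fin (N + N)) (Fin (N + N)) ℝ :=
  Matrix.reindex finSumFinEquiv finSumFinEquiv
    (Matrix.fromBlocks (L1 + Matrix.diagonal w) (-(Matrix.diagonal w))
      (-(Matrix.diagonal w)) (L2 + Matrix.diagonal w))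

namespace Matrix.IsHermitian

variable {n : Type*} [Fintype n] [DecidableEq n] {A : Matrix n n ℝ} (hA : A.IsHermitian)

lemma dotProduct_eq_sum_eigenvectorBasis (v w : n → ℝ) :
    v ⬝ᵥ w = ∑ k, (hA.eigenvectorBasis k ⬝ᵥ v) * (hA.eigenvectorBasis k ⬝ᵥ w) := by
  have := hA.eigenvectorBasis.sum_inner_mul_inner (WithLp.toLp 2 v) (WithLp.toLp 2 w)
  simp only [EuclideanSpace.inner_eq_star_dotProduct, star_trivial] at this
  rw [dotProduct_comm, ← this]
  exact Finset.sum_congr rfl fun k _ => by rw [dotProduct_comm w]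

lemma eigenvectorBasis_dotProduct_mulVec (k : n) (v : n → ℝ) :
    hA.eigenvectorBasis k ⬝ᵥ (A *ᵥ v) = hA.eigenvalues k * (hA.eigenvectorBasis k ⬝ᵥ v) := by
  have hAt : Aᵀ = A := by simpa using hA.eq
  rw [dotProduct_mulVec, ← mulVec_transpose, hAt, hA.mulVec_eigenvectorBasis, smul_dotProduct,
    smul_eq_mul]

lemma dotProduct_mulVec_self_eq_sum (v : n → ℝ) :
    v ⬝ᵥ (A *ᵥ v) = ∑ k, hA.eigenvalues k * (hA.eigenvectorBasis k ⬝ᵥ v) ^ 2 := by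
  rw [hA.dotProduct_eq_sum_eigenvectorBasis]
  refine Finset.sum_congr rfl fun k _ => ?_
  rw [eigenvectorBasis_dotProduct_mulVec]; ring

lemma dotProduct_self_eq_sum (v : n → ℝ) :
    v ⬝ᵥ v = ∑ k, (hA.eigenvectorBasis k ⬝ᵥ v) ^ 2 := by
  simp only [hA.dotProduct_eq_sum_eigenvectorBasis v v, sq]

lemma dotProduct_mulVec_self_le {μ : ℝ} (h : ∀ k, hA.eigenvalues k ≤ μ) (v : n → ℝ) :
    v ⬝ᵥ (A *ᵥ v) ≤ μ * (v ⬝ᵥ v) := by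
  rw [hA.dotProduct_mulVec_self_eq_sum, hA.dotProduct_self_eq_sum, Finset.mul_sum]
  gcongr with k
  exact h k

lemma le_dotProduct_mulVec_self {μ : ℝ} {v : n → ℝ}
    (h : ∀ k, hA.eigenvectorBasis k ⬝ᵥ v ≠ 0 → μ ≤ hA.eigenvalues k) :
    μ * (v ⬝ᵥ v) ≤ v ⬝ᵥ (A *ᵥ v) := by
  rw [hA.dotProduct_mulVec_self_eq_sum, hA.dotProduct_self_eq_sum, Finset.mul_sum]
  refine Finset.sum_le_sum fun k _ => ?_
  by_cases hk : hA.eigenvectorBasis k ⬝ᵥ v = 0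
  · simp [hk]
  · exact mul_le_mul_of_nonneg_right (h k hk) (sq_nonneg _)

end Matrix.IsHermitian

lemma dotProduct_self_pos {R n : Type*} [Fintype n] [Ring R] [LinearOrder R]
    [IsStrictOrderedRing R] {v : n → R} (hv : v ≠ 0) : 0 < v ⬝ᵥ v :=
  (Finset.sum_nonneg fun i _ => mul_self_nonneg (v i)).lt_of_ne'
    fun h => hv (dotProduct_self_eq_zero.mp h)

lemma exists_smul_add_smul_ne_zero_and_dotProduct_eq_zero {n : Type*} [Fintype n]
    (u v₁ v₂ : n → ℝ) (h : LinearIndependent ℝ ![v₁, v₂]) :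
    ∃ a b : ℝ, a • v₁ + b • v₂ ≠ 0 ∧ u ⬝ᵥ (a • v₁ + b • v₂) = 0 := by
  by_cases hu : u ⬝ᵥ v₁ = 0
  · exact ⟨1, 0, by simpa using h.ne_zero 0, by simpa using hu⟩
  · refine ⟨u ⬝ᵥ v₂, -(u ⬝ᵥ v₁), fun h0 => hu ?_, ?_⟩
    · exact neg_eq_zero.mp (LinearIndependent.pair_iff.mp h _ _ h0).2
    · simp only [dotProduct_add, dotProduct_smul, smul_eq_mul]; ring

section SortedEigs

variable {m : ℕ} {A : Matrix (Fin m) (Fin m) ℝ} (hA : A.IsHermitian)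
include hA

lemma sortedEigs_eq (k : Fin m) :
    sortedEigs A k = hA.eigenvalues (Tuple.sort hA.eigenvalues k) := by
  rw [sortedEigs, dif_pos hA]

lemma sortedEigs_monotone : Monotone (sortedEigs A) := by
  rw [sortedEigs, dif_pos hA]
  exact Tuple.monotone_sort hA.eigenvalues

lemma exists_mulVec_eq_sortedEigs_smul (k : Fin m) :
    ∃ v ≠ 0, A *ᵥ v = sortedEigs A k • v :=
  ⟨⇑(hA.eigenvectorBasis (Tuple.sort hA.eigenvalues k)),
    by simpa using hA.eigenvectorBasis.orthonormal.ne_zero (Tuple.sort hA.eigenvalues k),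
    by rw [sortedEigs_eq hA]; exact hA.mulVec_eigenvectorBasis _⟩

lemma eigenvalues_le_sortedEigs_last (hm : 0 < m) (k : Fin m) :
    hA.eigenvalues k ≤ sortedEigs A ⟨m - 1, by omega⟩ := by
  obtain ⟨j, rfl⟩ := (Tuple.sort hA.eigenvalues).surjective k
  rw [← sortedEigs_eq hA]
  exact sortedEigs_monotone hA (Fin.le_iff_val_le_val.mpr (Nat.le_sub_one_of_lt j.2))

lemma dotProduct_mulVec_self_le_sortedEigs_last (hm : 0 < m) (v : Fin m → ℝ) :
    v ⬝ᵥ (A *ᵥ v) ≤ sortedEigs A ⟨m - 1, by omega⟩ * (v ⬝ᵥ v) :=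
  hA.dotProduct_mulVec_self_le (eigenvalues_le_sortedEigs_last hA hm) v

lemma sortedEigs_one_mul_le_of_dotProduct_eq_zero (hm : 1 < m) {v : Fin m → ℝ}
    (hv : hA.eigenvectorBasis (Tuple.sort hA.eigenvalues ⟨0, by omega⟩) ⬝ᵥ v = 0) :
    sortedEigs A ⟨1, hm⟩ * (v ⬝ᵥ v) ≤ v ⬝ᵥ (A *ᵥ v) := by
  refine hA.le_dotProduct_mulVec_self fun k hk => ?_
  obtain ⟨j, rfl⟩ := (Tuple.sort hA.eigenvalues).surjective k
  have hj : j ≠ ⟨0, by omega⟩ := by rintro rfl; exact hk hv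
  rw [← sortedEigs_eq hA]
  exact sortedEigs_monotone hA
    (Fin.le_iff_val_le_val.mpr (Nat.one_le_iff_ne_zero.mpr fun h => hj (Fin.ext h)))

/-- Courant–Fischer: the plane contains a nonzero vector orthogonal to an eigenvector for `λ₁`. -/
lemma sortedEigs_one_le_of_linearIndependent (hm : 1 < m) {v₁ v₂ : Fin m → ℝ}
    (hli : LinearIndependent ℝ ![v₁, v₂]) {t : ℝ}
    (h : ∀ a b : ℝ, (a • v₁ + b • v₂) ⬝ᵥ (A *ᵥ (a • v₁ + b • v₂)) ≤
      t * ((a • v₁ + b • v₂) ⬝ᵥ (a • v₁ + b • v₂))) :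
    sortedEigs A ⟨1, hm⟩ ≤ t := by
  obtain ⟨a, b, hv0, hv⟩ := exists_smul_add_smul_ne_zero_and_dotProduct_eq_zero
    (hA.eigenvectorBasis (Tuple.sort hA.eigenvalues ⟨0, by omega⟩)) v₁ v₂ hli
  exact le_of_mul_le_mul_right
    ((sortedEigs_one_mul_le_of_dotProduct_eq_zero hA hm hv).trans (h a b)) (dotProduct_self_pos hv0)

end SortedEigs

section Supra

variable {N : ℕ}

/-- The vector `(x; y)` of `ℝ^(N+N)`, laid out as in `supraLap`. -/
def blockVec (x y : Fin N → ℝ) : Fin (N + N) → ℝ :=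
  Sum.elim x y ∘ finSumFinEquiv.symm

lemma blockVec_dotProduct_blockVec (x y x' y' : Fin N → ℝ) :
    blockVec x y ⬝ᵥ blockVec x' y' = x ⬝ᵥ x' + y ⬝ᵥ y' := by
  simp only [dotProduct, blockVec, Function.comp_apply]
  rw [← finSumFinEquiv.sum_comp]
  simp [Fintype.sum_sum_type]

lemma smul_blockVec_add_smul_blockVec (a b : ℝ) (x y x' y' : Fin N → ℝ) :
    a • blockVec x y + b • blockVec x' y' = blockVec (a • x + b • x') (a • y + b • y') := by
  funext i
  rcases h : finSumFinEquiv.symm i with j | j <;> simp [blockVec, h]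

lemma blockVec_eq_zero_iff {x y : Fin N → ℝ} : blockVec x y = 0 ↔ x = 0 ∧ y = 0 := by
  simp [blockVec, funext_iff, finSumFinEquiv.symm.forall_congr_left]

variable {L1 L2 : Matrix (Fin N) (Fin N) ℝ} {w : Fin N → ℝ}

lemma supraLap_mulVec_blockVec (x y : Fin N → ℝ) :
    supraLap L1 L2 w *ᵥ blockVec x y =
      blockVec ((L1 + diagonal w) *ᵥ x - diagonal w *ᵥ y)
        ((L2 + diagonal w) *ᵥ y - diagonal w *ᵥ x) := by
  rw [supraLap, reindex_apply, submatrix_mulVec_equiv, blockVec, Equiv.symm_symm,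
    Function.comp_assoc, Equiv.symm_comp_self, Function.comp_id, fromBlocks_mulVec,
    Sum.elim_comp_inl, Sum.elim_comp_inr, neg_mulVec, neg_mulVec, ← sub_eq_add_neg,
    neg_add_eq_sub]
  rfl

lemma blockVec_dotProduct_supraLap_mulVec_blockVec (x y : Fin N → ℝ) :
    blockVec x y ⬝ᵥ (supraLap L1 L2 w *ᵥ blockVec x y) =
      x ⬝ᵥ (L1 *ᵥ x) + y ⬝ᵥ (L2 *ᵥ y) + ∑ i, w i * (x i - y i) ^ 2 := by
  rw [supraLap_mulVec_blockVec, blockVec_dotProduct_blockVec]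
  simp only [add_mulVec, dotProduct, ← Finset.sum_add_distrib]
  refine Finset.sum_congr rfl fun i _ => ?_
  simp only [Pi.add_apply, Pi.sub_apply, mulVec_diagonal]
  ring

lemma supraLap_isHermitian (hL1 : L1.IsHermitian) (hL2 : L2.IsHermitian) :
    (supraLap L1 L2 w).IsHermitian := by
  rw [supraLap, reindex_apply]
  have hW : (diagonal w).IsHermitian := isHermitian_diagonal w
  exact ((hL1.add hW).fromBlocks (by rw [conjTranspose_neg, hW.eq]) (hL2.add hW)).submatrix _

end Supra

section SupraSpectrum

variable {N : ℕ} {L1 L2 : Matrix (Fin N) (Fin N) ℝ} (hL1 : L1.IsHermitian) (hL2 : L2.IsHermitian)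
  (w : Fin N → ℝ)
include hL1 hL2

lemma mul_add_sum_le_sortedEigs_supraLap_last (hN : 0 < N) {μ : ℝ} {x y : Fin N → ℝ}
    (hx : L1 *ᵥ x = μ • x) (hy : L2 *ᵥ y = μ • y) :
    μ * (x ⬝ᵥ x + y ⬝ᵥ y) + ∑ i, w i * (x i - y i) ^ 2 ≤
      sortedEigs (supraLap L1 L2 w) ⟨N + N - 1, by omega⟩ * (x ⬝ᵥ x + y ⬝ᵥ y) := by
  have h := dotProduct_mulVec_self_le_sortedEigs_last (supraLap_isHermitian (w := w) hL1 hL2)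
    (by omega) (blockVec x y)
  rw [blockVec_dotProduct_supraLap_mulVec_blockVec, blockVec_dotProduct_blockVec, hx, hy,
    dotProduct_smul, dotProduct_smul, smul_eq_mul, smul_eq_mul] at h
  linarith

lemma le_sortedEigs_supraLap_last (hN : 0 < N) (hw : ∀ i, 0 ≤ w i) {μ : ℝ} {x y : Fin N → ℝ}
    (hx : L1 *ᵥ x = μ • x) (hy : L2 *ᵥ y = μ • y) (hxy : 0 < x ⬝ᵥ x + y ⬝ᵥ y) :
    μ ≤ sortedEigs (supraLap L1 L2 w) ⟨N + N - 1, by omega⟩ := by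
  have h := mul_add_sum_le_sortedEigs_supraLap_last hL1 hL2 w hN hx hy
  have hsum : 0 ≤ ∑ i, w i * (x i - y i) ^ 2 :=
    Finset.sum_nonneg fun i _ => mul_nonneg (hw i) (sq_nonneg _)
  exact le_of_mul_le_mul_right (by linarith) hxy

lemma lt_sortedEigs_supraLap_last (hN : 0 < N) {μ : ℝ} {x y : Fin N → ℝ}
    (hx : L1 *ᵥ x = μ • x) (hy : L2 *ᵥ y = μ • y) (hxy : 0 < x ⬝ᵥ x + y ⬝ᵥ y)
    (hsum : 0 < ∑ i, w i * (x i - y i) ^ 2) :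
    μ < sortedEigs (supraLap L1 L2 w) ⟨N + N - 1, by omega⟩ := by
  have h := mul_add_sum_le_sortedEigs_supraLap_last hL1 hL2 w hN hx hy
  exact lt_of_mul_lt_mul_right (by linarith) hxy.le

lemma sortedEigs_supraLap_one_le (hN : 0 < N) (hL1e : L1 *ᵥ (fun _ => (1 : ℝ)) = 0)
    (hL2e : L2 *ᵥ (fun _ => (1 : ℝ)) = 0) (hw : 0 ≤ ∑ i, w i) :
    sortedEigs (supraLap L1 L2 w) ⟨1, by omega⟩ ≤ 2 * (∑ i, w i) / N := by
  have hcomb : ∀ a b : ℝ, a • blockVec (N := N) (fun _ => 1) (fun _ => 1) +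
      b • blockVec (fun _ => 1) (fun _ => -1) = blockVec (fun _ => a + b) (fun _ => a - b) := by
    intro a b
    rw [smul_blockVec_add_smul_blockVec]
    congr 1 <;> funext i <;> simp [sub_eq_add_neg]
  have hconst : ∀ (L : Matrix (Fin N) (Fin N) ℝ), L *ᵥ (fun _ => (1 : ℝ)) = 0 →
      ∀ s : ℝ, L *ᵥ (fun _ => s) = 0 := fun L hL s => by
    rw [show (fun _ => s) = s • (fun _ : Fin N => (1 : ℝ)) by funext; simp, mulVec_smul, hL,
      smul_zero]
  refine sortedEigs_one_le_of_linearIndependent (supraLap_isHermitian hL1 hL2) (by omega)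
    (v₁ := blockVec (fun _ => 1) (fun _ => 1)) (v₂ := blockVec (fun _ => 1) (fun _ => -1))
    (LinearIndependent.pair_iff.mpr fun a b h => ?_) fun a b => ?_
  · rw [hcomb, blockVec_eq_zero_iff] at h
    have h1 := congr_fun h.1 ⟨0, hN⟩
    have h2 := congr_fun h.2 ⟨0, hN⟩
    simp only [Pi.zero_apply] at h1 h2
    constructor <;> linarith
  · rw [hcomb, blockVec_dotProduct_supraLap_mulVec_blockVec, blockVec_dotProduct_blockVec,
      hconst L1 hL1e, hconst L2 hL2e, dotProduct_zero, dotProduct_zero, zero_add, zero_add,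
      show ∑ i, w i * (a + b - (a - b)) ^ 2 = 4 * b ^ 2 * ∑ i, w i by
        rw [Finset.mul_sum]; exact Finset.sum_congr rfl fun i _ => by ring]
    simp only [dotProduct, Finset.sum_const, Finset.card_univ, Fintype.card_fin, nsmul_eq_mul]
    field_simp
    nlinarith [mul_nonneg hw (sq_nonneg a)]

end SupraSpectrum

/-- Lower bound on the Laplacian spectral width (Lemma 8): with `M = max(λmax L1, λmax L2)`
and `w ≥ 0`, `∑ wᵢ = c`, one has `λₙ(L(w)) - λ₂(L(w)) ≥ M - 2c/N`; equality forces
`λₙ(L(w)) = M` and `λ₂(L(w)) = 2c/N`; and if moreover `λmax(L1) ≥ λmax(L2)`, `φ` is an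
eigenvector of `L1` for `λmax(L1)` with no zero entry, and `c > 0`, then the inequality is
strict. -/
theorem stmt18 (N : ℕ) (hN : 1 ≤ N)
    (L1 L2 : Matrix (Fin N) (Fin N) ℝ)
    (hL1 : L1.PosSemidef) (hL2 : L2.PosSemidef)
    (hL1e : L1 *ᵥ (fun _ => (1 : ℝ)) = 0) (hL2e : L2 *ᵥ (fun _ => (1 : ℝ)) = 0)
    (c : ℝ) (w : Fin N → ℝ) (hw : ∀ i, 0 ≤ w i) (hsum : ∑ i, w i = c) :
    let M : ℝ := max (sortedEigs L1 ⟨N - 1, by omega⟩) (sortedEigs L2 ⟨N - 1, by omega⟩)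
    let lamn : ℝ := sortedEigs (supraLap L1 L2 w) ⟨N + N - 1, by omega⟩
    let lam2 : ℝ := sortedEigs (supraLap L1 L2 w) ⟨1, by omega⟩
    (M - 2 * c / (N : ℝ) ≤ lamn - lam2) ∧
    (lamn - lam2 = M - 2 * c / (N : ℝ) → lamn = M ∧ lam2 = 2 * c / (N : ℝ)) ∧
    (sortedEigs L2 ⟨N - 1, by omega⟩ ≤ sortedEigs L1 ⟨N - 1, by omega⟩ →
      ∀ φ : Fin N → ℝ, L1 *ᵥ φ = sortedEigs L1 ⟨N - 1, by omega⟩ • φ →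
        (∀ i, φ i ≠ 0) → 0 < c → M - 2 * c / (N : ℝ) < lamn - lam2) := by
  intro M lamn lam2
  have hzero : ∀ {L : Matrix (Fin N) (Fin N) ℝ} {μ : ℝ}, L *ᵥ 0 = μ • 0 := by simp
  have hM : M ≤ lamn := by
    obtain ⟨u₁, hu₁, hL1u⟩ := exists_mulVec_eq_sortedEigs_smul hL1.1 ⟨N - 1, by omega⟩
    obtain ⟨u₂, hu₂, hL2u⟩ := exists_mulVec_eq_sortedEigs_smul hL2.1 ⟨N - 1, by omega⟩
    exact max_le
      (le_sortedEigs_supraLap_last hL1.1 hL2.1 w hN hw hL1u hzero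
        (by simpa using dotProduct_self_pos hu₁))
      (le_sortedEigs_supraLap_last hL1.1 hL2.1 w hN hw hzero hL2u
        (by simpa using dotProduct_self_pos hu₂))
  have h2 : lam2 ≤ 2 * c / N := hsum ▸
    sortedEigs_supraLap_one_le hL1.1 hL2.1 w hN hL1e hL2e (Finset.sum_nonneg fun i _ => hw i)
  refine ⟨by linarith, fun h => ⟨by linarith, by linarith⟩, fun hle φ hφ hφ0 hc => ?_⟩
  obtain ⟨i, hi⟩ : ∃ i, 0 < w i := by
    by_contra! h
    exact hc.not_ge (hsum ▸ Finset.sum_nonpos fun i _ => h i)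
  have hgap : 0 < ∑ i, w i * (φ i - (0 : Fin N → ℝ) i) ^ 2 :=
    Finset.sum_pos' (fun i _ => mul_nonneg (hw i) (sq_nonneg _))
      ⟨i, Finset.mem_univ i, by simpa using mul_pos hi (pow_pos (abs_pos.mpr (hφ0 i)) 2)⟩
  have hlt : sortedEigs L1 ⟨N - 1, by omega⟩ < lamn :=
    lt_sortedEigs_supraLap_last hL1.1 hL2.1 w hN hφ hzero
      (by simpa using dotProduct_self_pos fun h => hφ0 i (congr_fun h i)) hgap
  have hM1 : M = sortedEigs L1 ⟨N - 1, by omega⟩ := max_eq_left hle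
  linarith
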